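/- arXiv:2504.12464 — 6 statements merged into one kernel-verified Lean document; each statement's English description precedes it below -/
import Mathlib

section
/- If a type A is ●φ-modal, i.e. η : A → ●φ A is bijective, then the open modality ○φ A := φ → A has exactly one element: it is nonempty and any two of its elements are equal. -/
/-- The relation implementing the pushout `A ← A × φ → φ`: relates `Sum.inl a`
to `Sum.inr ⟨z⟩` for every `a : A` and `z : φ`. -/
inductive ClosedRel (φ : Prop) (A : Type u) : A ⊕ PLift φ → A ⊕ PLift φ → Prop
  | rel (a : A) (z : φ) : ClosedRel φ A (Sum.inl a) (Sum.inr ⟨z⟩)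

/-- The closed modality `●φ A`. -/
def Closed (φ : Prop) (A : Type u) : Type u := Quot (ClosedRel φ A)

/-- The unit `η : A → ●φ A`. -/
def Closed.eta (φ : Prop) {A : Type u} (a : A) : Closed φ A :=
  Quot.mk _ (Sum.inl a)

/-- The point `⋆ : φ → ●φ A`. -/
def Closed.star (φ : Prop) (A : Type u) (z : φ) : Closed φ A :=
  Quot.mk _ (Sum.inr ⟨z⟩)

/-- Functorial action of the closed modality. -/
def Closed.map (φ : Prop) {A : Type u} {B : Type v} (f : A → B) :
    Closed φ A → Closed φ B :=
  Quot.map (Sum.map f id) (by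
    intro x y h
    cases h with
    | rel a z => exact ClosedRel.rel (f a) z)

/-- A type is `●φ`-modal when the unit is bijective. -/
def ClosedModal (φ : Prop) (A : Type u) : Prop :=
  Function.Bijective (Closed.eta φ (A := A))

/-- If `A` is `●φ`-modal then the open modality `○φ A := φ → A`
has exactly one element. -/
theorem open_singleton_of_closedModal (φ : Prop) (A : Type u)
    (h : ClosedModal φ A) :
    Nonempty (φ → A) ∧ ∀ f g : φ → A, f = g := by
  constructor
  · exact ⟨fun z => (h.2 (Closed.star φ A z)).choose⟩
  · intro f g
    funext z
    apply h.1
    have h1 : Closed.eta φ (f z) = Closed.star φ A z :=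
      Quot.sound (ClosedRel.rel (f z) z)
    have h2 : Closed.eta φ (g z) = Closed.star φ A z :=
      Quot.sound (ClosedRel.rel (g z) z)
    rw [h1, h2]
end

section
/- (Idempotency of the closed modality.) For every type A, the type ●φ A is itself ●φ-modal: the unit η : ●φ A → ●φ (●φ A) is bijective. -/
lemma Closed.eq_star (φ : Prop) {A : Type u} (x : Closed φ A) (z : φ) :
    x = Closed.star φ A z := by
  induction x using Quot.ind with
  | _ s =>
    cases s with
    | inl a => exact Quot.sound (ClosedRel.rel a z)
    | inr w => rfl

/-- Retraction of the unit. -/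
def Closed.retr (φ : Prop) {A : Type u} : Closed φ (Closed φ A) → Closed φ A :=
  Quot.lift (fun s => match s with
    | Sum.inl x => x
    | Sum.inr ⟨z⟩ => Closed.star φ A z) (by
    intro x y h
    cases h with
    | rel a z => exact Closed.eq_star φ a z)

lemma Closed.retr_eta (φ : Prop) {A : Type u} (x : Closed φ A) :
    Closed.retr φ (Closed.eta φ x) = x := rfl

/-- Idempotency of the closed modality: `●φ A` is itself `●φ`-modal. -/
theorem closed_idempotent (φ : Prop) (A : Type u) :
    ClosedModal φ (Closed φ A) := by
  constructor
  · intro x y h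
    have := congrArg (Closed.retr φ) h
    simpa [Closed.retr_eta] using this
  · intro y
    refine ⟨Closed.retr φ y, ?_⟩
    induction y using Quot.ind with
    | _ s =>
      cases s with
      | inl x => rfl
      | inr w =>
        cases w with
        | _ z =>
          exact (Closed.eq_star φ (Closed.eta φ (Closed.star φ A z)) z).trans rfl
end

section
/- (The closed modality preserves finite products.) For all types A and B, the canonical map ●φ (A × B) → ●φ A × ●φ B, given componentwise by the functorial actions ●φ Prod.fst and ●φ Prod.snd, is bijective; moreover ●φ PUnit has exactly one element. -/
/-- If `φ` holds, the quotient collapses to a point. -/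
theorem Closed.all_eq (φ : Prop) {X : Type u} (z : φ) :
    ∀ x y : Closed φ X, x = y := by
  have key : ∀ w : X ⊕ PLift φ, Quot.mk (ClosedRel φ X) w = Quot.mk _ (Sum.inr ⟨z⟩) := by
    intro w
    cases w with
    | inl a => exact Quot.sound (ClosedRel.rel a z)
    | inr w => rfl
  intro x y
  induction x using Quot.ind with | _ a =>
  induction y using Quot.ind with | _ b =>
  rw [key a, key b]

theorem Closed.eta_inj (φ : Prop) {X : Type u} {a a' : X}
    (h : Quot.mk (ClosedRel φ X) (Sum.inl a) = Quot.mk _ (Sum.inl a')) :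
    a = a' ∨ φ := by
  have := congrArg (Quot.lift
    (fun w : X ⊕ PLift φ => match w with
      | Sum.inl x => x = a' ∨ φ
      | Sum.inr _ => True)
    (by
      intro x y hxy
      cases hxy with
      | rel b z => exact propext ⟨fun _ => trivial, fun _ => Or.inr z⟩)) h
  exact cast this.symm (Or.inl rfl)

/-- The closed modality preserves finite products. -/
theorem closed_preserves_products (φ : Prop) (A : Type u) (B : Type v) :
    Function.Bijective (fun x : Closed φ (A × B) =>
        (Closed.map φ Prod.fst x, Closed.map φ Prod.snd x)) ∧
      (Nonempty (Closed φ PUnit) ∧ ∀ x y : Closed φ PUnit, x = y) := by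
  refine ⟨⟨?_, ?_⟩, ⟨Closed.eta φ PUnit.unit⟩, ?_⟩
  · intro x y h
    induction x using Quot.ind with | _ a =>
    induction y using Quot.ind with | _ b =>
    cases a with
    | inl p =>
      cases b with
      | inl q =>
        have h1 : Quot.mk (ClosedRel φ A) (Sum.inl p.1) = Quot.mk _ (Sum.inl q.1) :=
          congrArg Prod.fst h
        have h2 : Quot.mk (ClosedRel φ B) (Sum.inl p.2) = Quot.mk _ (Sum.inl q.2) :=
          congrArg Prod.snd h
        rcases Closed.eta_inj φ h1 with h1' | z
        · rcases Closed.eta_inj φ h2 with h2' | z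
          · have : p = q := Prod.ext h1' h2'
            rw [this]
          · exact Closed.all_eq φ z _ _
        · exact Closed.all_eq φ z _ _
      | inr z => exact Closed.all_eq φ z.down _ _
    | inr z => exact Closed.all_eq φ z.down _ _
  · rintro ⟨u, v⟩
    induction u using Quot.ind with | _ a =>
    induction v using Quot.ind with | _ b =>
    cases a with
    | inl a =>
      cases b with
      | inl b => exact ⟨Closed.eta φ (a, b), rfl⟩
      | inr z =>
        exact ⟨Closed.star φ _ z.down,
          Prod.ext (Closed.all_eq φ z.down _ _) (Closed.all_eq φ z.down _ _)⟩
    | inr z =>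
      exact ⟨Closed.star φ _ z.down,
        Prod.ext (Closed.all_eq φ z.down _ _) (Closed.all_eq φ z.down _ _)⟩
  · intro x y
    induction x using Quot.ind with | _ a =>
    induction y using Quot.ind with | _ b =>
    cases a with
    | inl a =>
      cases b with
      | inl b => rfl
      | inr z => exact Quot.sound (ClosedRel.rel a z.down)
    | inr z =>
      cases b with
      | inl b => exact (Quot.sound (ClosedRel.rel b z.down)).symm
      | inr z' => exact congrArg (fun w => Quot.mk _ (Sum.inr w)) (Subsingleton.elim z z')
end

section
/- (The closed modality preserves pullbacks.) For all functions f : A → C and g : B → C, the canonical map from ●φ {p : A × B // f p.1 = g p.2} to the type {q : ●φ A × ●φ B // (●φ f) q.1 = (●φ g) q.2}, induced by the functorial actions of the two projections, is bijective. -/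
/-- The canonical comparison map from the closed modality of a pullback to the
pullback of the closed modalities, induced by the functorial actions of the two
projections. -/
def Closed.pullbackCompare (φ : Prop) {A : Type u} {B : Type v} {C : Type w}
    (f : A → C) (g : B → C) :
    Closed φ {p : A × B // f p.1 = g p.2} →
      {q : Closed φ A × Closed φ B // Closed.map φ f q.1 = Closed.map φ g q.2} :=
  fun x =>
    ⟨(Closed.map φ (fun p => p.1.1) x, Closed.map φ (fun p => p.1.2) x), by
      induction x using Quot.ind with
      | mk s =>
        cases s with
        | inl p => exact congrArg (Quot.mk _) (congrArg Sum.inl p.2)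
        | inr z => rfl⟩


lemma closed_all_eq (φ : Prop) {A : Type u} (z : φ)
    (x y : Quot (ClosedRel φ A)) : x = y := by
  have key : ∀ s : A ⊕ PLift φ, Quot.mk (ClosedRel φ A) s = Quot.mk _ (Sum.inr ⟨z⟩) := by
    intro s
    cases s with
    | inl a => exact Quot.sound (ClosedRel.rel a z)
    | inr w => rfl
  induction x using Quot.ind with | mk s =>
  induction y using Quot.ind with | mk t =>
  rw [key s, key t]

lemma closed_eq_cases (φ : Prop) {A : Type u} {s t : A ⊕ PLift φ}
    (h : Quot.mk (ClosedRel φ A) s = Quot.mk _ t) : s = t ∨ φ := by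
  have := Quot.eqvGen_exact h
  clear h
  induction this with
  | rel a b hab => cases hab with | rel a z => exact Or.inr z
  | refl => exact Or.inl rfl
  | symm a b _ ih => rcases ih with h | h; exact Or.inl h.symm; exact Or.inr h
  | trans a b c _ _ ih1 ih2 =>
      rcases ih1 with h1 | h1
      · rcases ih2 with h2 | h2
        · exact Or.inl (h1.trans h2)
        · exact Or.inr h2
      · exact Or.inr h1

/-- The closed modality preserves pullbacks. -/
theorem closed_preserves_pullbacks (φ : Prop) (A : Type u) (B : Type v) (C : Type w)
    (f : A → C) (g : B → C) :
    Function.Bijective (Closed.pullbackCompare φ f g) := by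

  constructor
  · intro x y h
    induction x using Quot.ind with | mk s =>
    induction y using Quot.ind with | mk t =>
    have h1 := congrArg (fun q => q.1.1) h
    have h2 := congrArg (fun q => q.1.2) h
    cases s with
    | inl p =>
      cases t with
      | inl p' =>
        rcases closed_eq_cases φ h1 with he1 | hz
        · rcases closed_eq_cases φ h2 with he2 | hz
          · have : p = p' := Subtype.ext (Prod.ext (Sum.inl.inj he1) (Sum.inl.inj he2))
            rw [this]
          · exact closed_all_eq φ hz _ _
        · exact closed_all_eq φ hz _ _
      | inr z => exact closed_all_eq φ z.down _ _
    | inr z => exact closed_all_eq φ z.down _ _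
  · rintro ⟨⟨qa, qb⟩, hq⟩
    induction qa using Quot.ind with | mk sa =>
    induction qb using Quot.ind with | mk sb =>
    cases sa with
    | inl a =>
      cases sb with
      | inl b =>
        rcases closed_eq_cases φ hq with he | hz
        · exact ⟨Closed.eta φ ⟨(a, b), Sum.inl.inj he⟩, rfl⟩
        · exact ⟨Closed.star φ _ hz, Subtype.ext (Prod.ext
            (closed_all_eq φ hz _ _) (closed_all_eq φ hz _ _))⟩
      | inr z =>
        exact ⟨Closed.star φ _ z.down, Subtype.ext (Prod.ext
          (closed_all_eq φ z.down _ _) (closed_all_eq φ z.down _ _))⟩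
    | inr z =>
      exact ⟨Closed.star φ _ z.down, Subtype.ext (Prod.ext
        (closed_all_eq φ z.down _ _) (closed_all_eq φ z.down _ _))⟩
end

section
/- (Fracture theorem.) For every type A, the map from A to the pullback type {p : (φ → A) × ●φ A // ∀ z : φ, p.2 = η (p.1 z)} sending a to the pair ((fun _ => a), η a) is bijective; hence every type is determined by its open part φ → A and its closed part ●φ A glued along the indicated compatibility. -/
/-- Fracture theorem: every type is the pullback of its open part
`φ → A` and its closed part `●φ A` glued along the indicated compatibility. -/
theorem fracture (φ : Prop) (A : Type u) :
    Function.Bijective (fun a : A =>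
      (⟨((fun _ => a), Closed.eta φ a), fun _ => rfl⟩ :
        {p : (φ → A) × Closed φ A // ∀ z : φ, p.2 = Closed.eta φ (p.1 z)})) := by
  constructor
  · intro a b hab
    by_cases hφ : φ
    · exact congrFun (congrArg (fun p => p.1.1) hab) hφ
    · have h2 : Closed.eta φ a = Closed.eta φ b :=
        congrArg (fun p => p.1.2) hab
      have key : ∀ x y : A ⊕ PLift φ, Relation.EqvGen (ClosedRel φ A) x y → x = y := by
        intro x y h
        induction h with
        | rel _ _ h => cases h with | rel a z => exact absurd z hφ
        | refl => rfl
        | symm _ _ _ ih => exact ih.symm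
        | trans _ _ _ _ _ ih1 ih2 => exact ih1.trans ih2
      exact Sum.inl.inj (key _ _ (Quot.eqvGen_exact h2))
  · rintro ⟨⟨f, c⟩, h⟩
    by_cases hφ : φ
    · refine ⟨f hφ, Subtype.ext ?_⟩
      exact Prod.ext (funext fun z => rfl) (h hφ).symm
    · obtain ⟨x, hx⟩ := c.exists_rep
      cases x with
      | inl a =>
        refine ⟨a, Subtype.ext ?_⟩
        exact Prod.ext (funext fun z => absurd z hφ) hx
      | inr z => exact absurd z.down hφ
end

section
/- (The glue type restricts to its open part under the phase.) Let A : φ → Type, and let B : ((z : φ) → A z) → Type be a family such that B x is ●φ-modal for every x : (z : φ) → A z. Then for every z : φ, the map from the glue type Σ x : ((z : φ) → A z), B x to A z sending a pair (x, b) to x z is bijective. -/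
/-- The glue type restricts to its open part under the phase. -/
theorem glue_restricts (φ : Prop) (A : φ → Type u)
    (B : ((z : φ) → A z) → Type v)
    (hB : ∀ x : (z : φ) → A z, ClosedModal φ (B x)) (z : φ) :
    Function.Bijective (fun s : Σ x : (z : φ) → A z, B x => s.1 z) := by
  have hsub : ∀ x, Subsingleton (B x) := by
    intro x
    constructor
    intro b b'
    apply (hB x).1
    show Quot.mk _ (Sum.inl b) = Quot.mk _ (Sum.inl b')
    calc Quot.mk _ (Sum.inl b) = Quot.mk _ (Sum.inr ⟨z⟩) := Quot.sound (ClosedRel.rel b z)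
      _ = Quot.mk _ (Sum.inl b') := (Quot.sound (ClosedRel.rel b' z)).symm
  constructor
  · rintro ⟨x, b⟩ ⟨y, c⟩ h
    simp only at h
    have hxy : x = y := funext fun z' => h
    subst hxy
    have := hsub x
    rw [Subsingleton.elim b c]
  · intro a
    let x : (z' : φ) → A z' := fun _ => a
    obtain ⟨b, -⟩ := (hB x).2 (Closed.star φ (B x) z)
    exact ⟨⟨x, b⟩, rfl⟩
end
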